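/- arXiv:2207.06750 — 6 statements merged into one kernel-verified Lean document; each statement's English description precedes it below -/
import Mathlib

section
/- Let C be a nonempty closed convex subset of R^n whose recession cone has nonempty interior. If there exists a compact set K with K + recc C ⊇ C, then C is self-bounded, i.e. there exists y in R^n with {y} + recc C ⊇ C. -/
open Metric Set Filter
open scoped ENNReal Pointwise Topology RealInnerProductSpace

noncomputable section

/-- The recession cone of a set `C`. -/
def recc {n : ℕ} (C : Set (EuclideanSpace ℝ (Fin n))) : Set (EuclideanSpace ℝ (Fin n)) :=
  {d | ∀ x ∈ C, ∀ t : ℝ, 0 ≤ t → x + t • d ∈ C}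

/-- The excess of `C₁` over `C₂`: `sup_{c₁ ∈ C₁} inf_{c₂ ∈ C₂} ‖c₁ - c₂‖`, valued in `ℝ≥0∞`. -/
def exc {n : ℕ} (C₁ C₂ : Set (EuclideanSpace ℝ (Fin n))) : ℝ≥0∞ :=
  ⨆ x ∈ C₁, EMetric.infEdist x C₂

lemma recc_smul {n : ℕ} {C : Set (EuclideanSpace ℝ (Fin n))} {t : ℝ} (ht : 0 ≤ t)
    {d : EuclideanSpace ℝ (Fin n)} (hd : d ∈ recc C) : t • d ∈ recc C := by
  intro x hx s hs
  rw [smul_smul]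
  exact hd x hx (s * t) (mul_nonneg hs ht)

lemma recc_add {n : ℕ} {C : Set (EuclideanSpace ℝ (Fin n))} {d₁ d₂ : EuclideanSpace ℝ (Fin n)}
    (h₁ : d₁ ∈ recc C) (h₂ : d₂ ∈ recc C) : d₁ + d₂ ∈ recc C := by
  intro x hx t ht
  have := h₂ (x + t • d₁) (h₁ x hx t ht) t ht
  simpa [smul_add, add_assoc] using this

theorem stmt2 {n : ℕ} (C : Set (EuclideanSpace ℝ (Fin n))) (hne : C.Nonempty)
    (hcl : IsClosed C) (hcv : Convex ℝ C) (hsolid : (interior (recc C)).Nonempty)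
    (hK : ∃ K : Set (EuclideanSpace ℝ (Fin n)), IsCompact K ∧ C ⊆ K + recc C) :
    ∃ y : EuclideanSpace ℝ (Fin n), C ⊆ {y} + recc C := by
  obtain ⟨K, hKc, hKsub⟩ := hK
  obtain ⟨e, he⟩ := hsolid
  obtain ⟨r, hr, hball⟩ := Metric.mem_nhds_iff.mp (mem_interior_iff_mem_nhds.mp he)
  have hball' : Metric.ball e r ⊆ recc C := hball
  obtain ⟨M, hM⟩ := isBounded_iff_forall_norm_le.mp hKc.isBounded
  set t : ℝ := (max M 0 + 1) / r with ht_def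
  have ht : 0 < t := div_pos (by positivity) hr
  refine ⟨-(t • e), fun c hc => ?_⟩
  obtain ⟨k, hk, d, hd, hkd⟩ := hKsub hc
  have hke : k + t • e ∈ recc C := by
    have h1 : e + t⁻¹ • k ∈ Metric.ball e r := by
      rw [Metric.mem_ball, dist_eq_norm]
      have : ‖e + t⁻¹ • k - e‖ = ‖k‖ / t := by
        rw [add_sub_cancel_left, norm_smul, norm_inv, Real.norm_eq_abs,
          abs_of_pos ht, inv_mul_eq_div]
      rw [this, div_lt_iff₀ ht, ht_def, mul_comm, div_mul_cancel₀ _ hr.ne']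
      calc ‖k‖ ≤ max M 0 := le_trans (hM k hk) (le_max_left _ _)
        _ < max M 0 + 1 := by linarith
    have h2 : t • (e + t⁻¹ • k) ∈ recc C := recc_smul ht.le (hball' h1)
    have h3 : t • (e + t⁻¹ • k) = k + t • e := by
      rw [smul_add, smul_smul, mul_inv_cancel₀ ht.ne', one_smul, add_comm]
    rwa [h3] at h2
  refine ⟨-(t • e), rfl, (k + t • e) + d, recc_add hke hd, ?_⟩
  rw [← hkd]
  abel
end
end

section
/- In R^2, the set C = conv{e_1, -e_1} + cone{e_2} (where e_1, e_2 are the standard unit vectors) satisfies exc(C, recc C) = 1, but C is not self-bounded: there is no y in R^2 with {y} + recc C ⊇ C. -/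
/-!
`C` is the half-strip `|x₀| ≤ 1, x₁ ≥ 0` and its recession cone is the upward ray. Over the
half-strip the distance to the ray is `|x₀| ≤ 1`, with equality at `e₁`. Every translate of the
ray lies on a single vertical line, so none contains both `e₁` and `-e₁`.
-/

open Metric Set Filter
open scoped ENNReal Pointwise Topology RealInnerProductSpace

noncomputable section

theorem map_eq_of_mem_of_subset_singleton_add {M N F : Type*} [Add M] [AddZeroClass N]
    [FunLike F M N] [AddHomClass F M N] (f : F) {C K : Set M} {x y : M}
    (hK : ∀ d ∈ K, f d = 0) (hCK : C ⊆ {y} + K) (hx : x ∈ C) : f x = f y := by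
  obtain ⟨y, rfl, d, hd, rfl⟩ := hCK hx
  rw [map_add, hK d hd, add_zero]

theorem abs_sub_apply_le_dist {ι : Type*} [Fintype ι] (x y : EuclideanSpace ℝ ι) (i : ι) :
    |x i - y i| ≤ dist x y := by
  simpa [dist_eq_norm] using PiLp.norm_apply_le (x - y) i

def halfStrip : Set (EuclideanSpace ℝ (Fin 2)) := {x | |x 0| ≤ 1 ∧ 0 ≤ x 1}

def upwardRay : Set (EuclideanSpace ℝ (Fin 2)) := {d | d 0 = 0 ∧ 0 ≤ d 1}

theorem convexHull_pair_add_ray_eq_halfStrip :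
    convexHull ℝ {EuclideanSpace.single 0 1, -EuclideanSpace.single 0 1} +
      {x | ∃ t : ℝ, 0 ≤ t ∧ x = t • EuclideanSpace.single 1 1} = halfStrip := by
  ext x
  rw [convexHull_pair, segment_eq_image]
  constructor
  · rintro ⟨_, ⟨θ, ⟨hθ₀, hθ₁⟩, rfl⟩, _, ⟨t, ht, rfl⟩, rfl⟩
    refine ⟨?_, by simpa using ht⟩
    have hx₀ : |(1 - θ) * 1 + θ * -1| ≤ 1 := abs_le.mpr ⟨by linarith, by linarith⟩
    simpa using hx₀
  · rintro ⟨hx₀, hx₁⟩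
    obtain ⟨hl, hr⟩ := abs_le.mp hx₀
    refine ⟨_, ⟨(1 - x 0) / 2, ⟨by linarith, by linarith⟩, rfl⟩, _, ⟨x 1, hx₁, rfl⟩, ?_⟩
    ext i
    fin_cases i <;> simp; ring

theorem recc_halfStrip : recc halfStrip = upwardRay := by
  ext d
  constructor
  · intro hd
    have hright := (hd (EuclideanSpace.single 0 1) (by simp [halfStrip]) 1 zero_le_one)
    have hleft := (hd (-EuclideanSpace.single 0 1) (by simp [halfStrip]) 1 zero_le_one)
    simp only [halfStrip] at hright hleft
    norm_num at hright hleft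
    obtain ⟨h₁, h₂⟩ := hright
    obtain ⟨h₃, -⟩ := hleft
    exact ⟨by linarith [abs_le.mp h₁, abs_le.mp h₃], h₂⟩
  · rintro ⟨hd₀, hd₁⟩ x ⟨hx₀, hx₁⟩ t ht
    refine ⟨by simpa [hd₀] using hx₀, ?_⟩
    simp only [PiLp.add_apply, PiLp.smul_apply, smul_eq_mul]
    positivity

theorem infEDist_upwardRay {x : EuclideanSpace ℝ (Fin 2)} (hx : 0 ≤ x 1) :
    infEDist x upwardRay = ENNReal.ofReal |x 0| := by
  apply le_antisymm
  · have hp : EuclideanSpace.single 1 (x 1) ∈ upwardRay := by simp [upwardRay, hx]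
    calc infEDist x upwardRay ≤ edist x (EuclideanSpace.single 1 (x 1)) :=
          infEDist_le_edist_of_mem hp
      _ = ENNReal.ofReal |x 0| := by
          rw [edist_dist, EuclideanSpace.dist_eq, Fin.sum_univ_two]
          simp [Real.sqrt_sq_eq_abs]
  · refine le_infEDist.mpr fun d hd => ?_
    rw [edist_dist]
    refine ENNReal.ofReal_le_ofReal ?_
    simpa [hd.1] using abs_sub_apply_le_dist x d 0

theorem exc_halfStrip_upwardRay : exc halfStrip upwardRay = 1 := by
  apply le_antisymm
  · refine iSup₂_le fun x hx => ?_
    refine (infEDist_upwardRay hx.2).trans_le ?_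
    rw [← ENNReal.ofReal_one]
    exact ENNReal.ofReal_le_ofReal hx.1
  · have he₁ : EuclideanSpace.single 0 (1 : ℝ) ∈ halfStrip := by simp [halfStrip]
    refine le_iSup₂_of_le _ he₁ ?_
    refine (infEDist_upwardRay he₁.2).ge.trans' ?_
    simp

theorem not_exists_halfStrip_subset_singleton_add_upwardRay :
    ¬ ∃ y, halfStrip ⊆ {y} + upwardRay := by
  rintro ⟨y, hy⟩
  have hproj : ∀ d ∈ upwardRay, EuclideanSpace.proj (0 : Fin 2) d = 0 := fun d hd => hd.1
  have hright := map_eq_of_mem_of_subset_singleton_add _ hproj hy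
    (x := EuclideanSpace.single 0 1) (by simp [halfStrip])
  have hleft := map_eq_of_mem_of_subset_singleton_add _ hproj hy
    (x := -EuclideanSpace.single 0 1) (by simp [halfStrip])
  simp only [PiLp.proj_apply, PiLp.single_eq_same, PiLp.neg_apply] at hright hleft
  linarith

theorem stmt3 :
    let e₁ : EuclideanSpace ℝ (Fin 2) := EuclideanSpace.single 0 1
    let e₂ : EuclideanSpace ℝ (Fin 2) := EuclideanSpace.single 1 1
    let C : Set (EuclideanSpace ℝ (Fin 2)) :=
      convexHull ℝ {e₁, -e₁} + {x | ∃ t : ℝ, 0 ≤ t ∧ x = t • e₂}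
    exc C (recc C) = 1 ∧ ¬ ∃ y : EuclideanSpace ℝ (Fin 2), C ⊆ {y} + recc C := by
  intro e₁ e₂ C
  have hC : C = halfStrip := convexHull_pair_add_ray_eq_halfStrip
  rw [hC, recc_halfStrip]
  exact ⟨exc_halfStrip_upwardRay, not_exists_halfStrip_subset_singleton_add_upwardRay⟩
end
end

section
/- Let C1, C2 be nonempty closed convex subsets of R^n. If the Hausdorff distance between C1 and C2 is finite, then recc C1 = recc C2. -/
open Metric Set Filter
open scoped ENNReal Pointwise Topology RealInnerProductSpace

noncomputable section

/-! If a ray `x₀ + s • d` stays within distance `R` of a closed convex set `C`, pick `z s ∈ C`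
near `x₀ + s • d`. For `x ∈ C`, the points `x + (t / s) • (z s - x)` of `C` differ from
`x + t • d` by `(t / s)` times a vector of norm at most `R + ‖x₀ - x‖`, so they converge to
`x + t • d` as `s → ∞`, and closedness puts `x + t • d` in `C`. A finite Hausdorff distance
between `A` and `B` makes every ray of `A` such a ray for `B`, so `recc A ⊆ recc B`. -/

theorem Convex.add_smul_mem_of_forall_exists_dist_le {E : Type*} [NormedAddCommGroup E]
    [NormedSpace ℝ E] {C : Set E} (hv : Convex ℝ C) (hc : IsClosed C) {x₀ d : E} {R : ℝ}
    (hnear : ∀ s : ℝ, 0 ≤ s → ∃ z ∈ C, dist (x₀ + s • d) z ≤ R)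
    {x : E} (hx : x ∈ C) {t : ℝ} (ht : 0 ≤ t) : x + t • d ∈ C := by
  choose! z hzC hz using hnear
  have hmem : ∀ᶠ s in atTop, x + (t / s) • (z s - x) ∈ C := by
    filter_upwards [eventually_ge_atTop t, eventually_gt_atTop 0] with s hts hs
    exact hv.add_smul_sub_mem hx (hzC s hs.le) ⟨div_nonneg ht hs.le, div_le_one_of_le₀ hts hs.le⟩
  have hbound : ∀ᶠ s in atTop,
      ‖x + (t / s) • (z s - x) - (x + t • d)‖ ≤ t / s * (R + ‖x₀ - x‖) := by
    filter_upwards [eventually_gt_atTop 0] with s hs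
    have hsplit : x + (t / s) • (z s - x) - (x + t • d)
        = (t / s) • ((z s - (x₀ + s • d)) + (x₀ - x)) := by
      have htd : t • d = (t / s) • (s • d) := by rw [smul_smul, div_mul_cancel₀ t hs.ne']
      rw [htd]
      module
    rw [hsplit, norm_smul, Real.norm_of_nonneg (div_nonneg ht hs.le)]
    gcongr
    calc ‖z s - (x₀ + s • d) + (x₀ - x)‖ ≤ ‖z s - (x₀ + s • d)‖ + ‖x₀ - x‖ := norm_add_le _ _
      _ ≤ R + ‖x₀ - x‖ := by rw [← dist_eq_norm, dist_comm]; gcongr; exact hz s hs.le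
  have hlim : Tendsto (fun s => x + (t / s) • (z s - x)) atTop (𝓝 (x + t • d)) := by
    rw [← tendsto_sub_nhds_zero_iff]
    refine squeeze_zero_norm' hbound ?_
    simpa using (tendsto_const_nhds.div_atTop tendsto_id).mul_const (R + ‖x₀ - x‖)
  exact hc.mem_of_tendsto hlim hmem

theorem recc_subset_recc_of_hausdorffEDist_ne_top {n : ℕ} {A B : Set (EuclideanSpace ℝ (Fin n))}
    (hc : IsClosed B) (hv : Convex ℝ B) (hfin : hausdorffEDist A B ≠ ⊤) : recc A ⊆ recc B := by
  intro d hd x hx t ht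
  obtain ⟨x₀, hx₀, -⟩ := exists_dist_lt_of_hausdorffDist_lt' hx (lt_add_one _) hfin
  refine hv.add_smul_mem_of_forall_exists_dist_le hc (x₀ := x₀) (R := hausdorffDist A B + 1)
    (fun s hs => ?_) hx ht
  obtain ⟨z, hz, hdist⟩ := exists_dist_lt_of_hausdorffDist_lt (hd x₀ hx₀ s hs) (lt_add_one _) hfin
  exact ⟨z, hz, hdist.le⟩

theorem stmt4_general {n : ℕ} (C₁ C₂ : Set (EuclideanSpace ℝ (Fin n)))
    (hc₁ : IsClosed C₁) (hc₂ : IsClosed C₂)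
    (hv₁ : Convex ℝ C₁) (hv₂ : Convex ℝ C₂)
    (hfin : EMetric.hausdorffEdist C₁ C₂ ≠ ⊤) :
    recc C₁ = recc C₂ :=
  (recc_subset_recc_of_hausdorffEDist_ne_top hc₂ hv₂ hfin).antisymm
    (recc_subset_recc_of_hausdorffEDist_ne_top hc₁ hv₁ (hausdorffEDist_comm (s := C₁) ▸ hfin))

theorem stmt4 {n : ℕ} (C₁ C₂ : Set (EuclideanSpace ℝ (Fin n)))
    (h₁ : C₁.Nonempty) (h₂ : C₂.Nonempty) (hc₁ : IsClosed C₁) (hc₂ : IsClosed C₂)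
    (hv₁ : Convex ℝ C₁) (hv₂ : Convex ℝ C₂)
    (hfin : EMetric.hausdorffEdist C₁ C₂ ≠ ⊤) :
    recc C₁ = recc C₂ :=
  stmt4_general C₁ C₂ hc₁ hc₂ hv₁ hv₂ hfin
end
end

section
/- Let C ⊆ R^n be nonempty, closed, convex, and line-free (i.e. recc C is pointed), and suppose sequences v^ν, r^ν in R^n satisfy: inf_{c∈C} ||v^ν - c|| → 0, inf_{r∈recc C} ||r^ν - r|| → 0, and v^ν + r^ν ∈ B_M(x) for some fixed M ≥ 0 and x ∈ R^n. Then the sequence ||v^ν|| is bounded. -/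
open Metric Set Filter
open scoped ENNReal Pointwise Topology RealInnerProductSpace

noncomputable section

/-
Approximate `v ν` by `c ν ∈ C` and `r ν` by `d ν ∈ recc C`, so that `c ν + d ν` stays bounded.
If `‖c ν‖` were unbounded, a limit `u` of the unit directions `c ν / ‖c ν‖` along a subsequence
lies in the asymptotic cone of `C`, which for a closed convex set is `recc C`; since
`c ν + d ν` is bounded, `d ν / ‖c ν‖ → -u`, so `-u ∈ recc C` as well, and pointedness
contradicts `‖u‖ = 1`.
-/

open AffineSpace

section AsymptoticCone

variable {V : Type*} [AddCommGroup V] [Module ℝ V] [TopologicalSpace V] [IsTopologicalAddGroup V]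
  [ContinuousSMul ℝ V]

theorem mem_asymptoticCone_of_tendsto_inv_smul {ι : Type*} {l : Filter ι} [l.NeBot]
    {s : Set V} {f : ι → V} {t : ι → ℝ} {v : V} (hf : ∀ i, f i ∈ s) (ht : Tendsto t l atTop)
    (hv : Tendsto (fun i => (t i)⁻¹ • f i) l (𝓝 v)) : v ∈ asymptoticCone ℝ s := by
  have hfv : Tendsto f l (asymptoticNhds ℝ V v) := by
    refine (ht.atTop_smul_nhds_tendsto_asymptoticNhds hv).congr' ?_
    filter_upwards [ht.eventually_ne_atTop 0] with i hi
    exact smul_inv_smul₀ hi (f i)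
  exact hfv.frequently (Frequently.of_forall hf)

end AsymptoticCone

section RecessionCone

variable {n : ℕ} {C : Set (EuclideanSpace ℝ (Fin n))}

theorem zero_mem_recc : (0 : EuclideanSpace ℝ (Fin n)) ∈ recc C := by
  intro x hx t _
  simpa using hx

theorem recc_subset_asymptoticCone (hne : C.Nonempty) : recc C ⊆ asymptoticCone ℝ C := by
  intro d hd
  obtain ⟨p, hp⟩ := hne
  have hray : Tendsto (fun t : ℝ => t • d +ᵥ p) atTop (asymptoticNhds ℝ _ d) :=
    (tendsto_id.atTop_smul_const_tendsto_asymptoticNhds d).asymptoticNhds_vadd_const p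
  refine hray.frequently (Eventually.frequently ?_)
  filter_upwards [eventually_ge_atTop 0] with t ht
  rw [vadd_eq_add, add_comm]
  exact hd p hp t ht

theorem asymptoticCone_subset_recc (hcl : IsClosed C) (hcv : Convex ℝ C) :
    asymptoticCone ℝ C ⊆ recc C := fun _ hd x hx t ht => by
  simpa [add_comm] using hcv.smul_vadd_mem_of_isClosed_of_mem_asymptoticCone hcl ht hd hx

theorem recc_eq_asymptoticCone (hne : C.Nonempty) (hcl : IsClosed C) (hcv : Convex ℝ C) :
    recc C = asymptoticCone ℝ C :=
  (recc_subset_asymptoticCone hne).antisymm (asymptoticCone_subset_recc hcl hcv)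

theorem not_tendsto_norm_atTop_of_norm_add_le (hne : C.Nonempty) (hcl : IsClosed C)
    (hcv : Convex ℝ C) (hpointed : ∀ d ∈ recc C, -d ∈ recc C → d = 0)
    {c d : ℕ → EuclideanSpace ℝ (Fin n)} {R : ℝ}
    (hc : ∀ k, c k ∈ C) (hd : ∀ k, d k ∈ recc C) (hR : ∀ k, ‖c k + d k‖ ≤ R) :
    ¬ Tendsto (fun k => ‖c k‖) atTop atTop := by
  intro hinf
  set w := fun k => ‖c k‖⁻¹ • c k
  have hw : ∀ k, w k ∈ closedBall 0 1 := fun k => by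
    simpa [w, norm_smul] using inv_mul_le_one_of_le₀ le_rfl (norm_nonneg (c k))
  obtain ⟨u, -, φ, hφ, hwu⟩ := tendsto_subseq_of_bounded isBounded_closedBall hw
  have hinfφ := hinf.comp hφ.tendsto_atTop
  have hu_norm : ‖u‖ = 1 := by
    refine tendsto_nhds_unique hwu.norm (tendsto_const_nhds.congr' ?_)
    filter_upwards [hinfφ.eventually_gt_atTop 0] with j (hj : 0 < ‖c (φ j)‖)
    simp [w, norm_smul, hj.ne']
  have hu : u ∈ recc C := by
    rw [recc_eq_asymptoticCone hne hcl hcv]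
    exact mem_asymptoticCone_of_tendsto_inv_smul (fun j => hc (φ j)) hinfφ hwu
  have hsum : Tendsto (fun j => ‖c (φ j)‖⁻¹ • (c (φ j) + d (φ j))) atTop (𝓝 0) :=
    NormedField.tendsto_zero_smul_of_tendsto_zero_of_bounded hinfφ.inv_tendsto_atTop
      ⟨R, eventually_map.2 (Eventually.of_forall fun j => hR (φ j))⟩
  have hneg_u : -u ∈ recc C := by
    rw [recc_eq_asymptoticCone hne hcl hcv, ← asymptoticCone_asymptoticCone]
    refine mem_asymptoticCone_of_tendsto_inv_smul (f := fun j => d (φ j)) (fun j => ?_) hinfφ ?_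
    · exact recc_subset_asymptoticCone hne (hd (φ j))
    · simpa [w, smul_add] using hsum.sub hwu
  simp [hpointed u hu hneg_u] at hu_norm

theorem exists_norm_le_of_norm_add_le (hne : C.Nonempty) (hcl : IsClosed C)
    (hcv : Convex ℝ C) (hpointed : ∀ d ∈ recc C, -d ∈ recc C → d = 0)
    {c d : ℕ → EuclideanSpace ℝ (Fin n)} {R : ℝ}
    (hc : ∀ k, c k ∈ C) (hd : ∀ k, d k ∈ recc C) (hR : ∀ k, ‖c k + d k‖ ≤ R) :
    ∃ B, ∀ k, ‖c k‖ ≤ B := by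
  by_contra! hunb
  choose ψ hψ using fun k : ℕ => hunb k
  refine not_tendsto_norm_atTop_of_norm_add_le hne hcl hcv hpointed (fun k => hc (ψ k))
    (fun k => hd (ψ k)) (fun k => hR (ψ k)) ?_
  exact tendsto_atTop_mono (fun k => (hψ k).le) tendsto_natCast_atTop_atTop

end RecessionCone

theorem stmt7_general {n : ℕ} (C : Set (EuclideanSpace ℝ (Fin n)))
    (hne : C.Nonempty) (hcl : IsClosed C) (hcv : Convex ℝ C)
    (hpointed : ∀ d ∈ recc C, -d ∈ recc C → d = 0)
    (v r : ℕ → EuclideanSpace ℝ (Fin n))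
    (hv : Tendsto (fun ν => Metric.infDist (v ν) C) atTop (nhds 0))
    (hr : Tendsto (fun ν => Metric.infDist (r ν) (recc C)) atTop (nhds 0))
    (M : ℝ) (x : EuclideanSpace ℝ (Fin n))
    (hball : ∀ ν, v ν + r ν ∈ Metric.closedBall x M) :
    ∃ B : ℝ, ∀ ν, ‖v ν‖ ≤ B := by
  obtain ⟨a, ha⟩ := hv.bddAbove_range
  obtain ⟨b, hb⟩ := hr.bddAbove_range
  choose c hcC hvc using fun ν =>
    (infDist_lt_iff hne).1 ((ha ⟨ν, rfl⟩).trans_lt (lt_add_one a))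
  choose d hdR hrd using fun ν =>
    (infDist_lt_iff ⟨0, zero_mem_recc⟩).1 ((hb ⟨ν, rfl⟩).trans_lt (lt_add_one b))
  have hcd : ∀ ν, ‖c ν + d ν‖ ≤ (a + 1) + (b + 1) + (M + ‖x‖) := fun ν => by
    calc ‖c ν + d ν‖ = dist (c ν + d ν) 0 := (dist_zero_right _).symm
      _ ≤ dist (c ν + d ν) (v ν + r ν) + dist (v ν + r ν) x + dist x 0 := dist_triangle4 _ _ _ _
      _ ≤ dist (c ν) (v ν) + dist (d ν) (r ν) + M + ‖x‖ := by
        gcongr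
        · exact dist_add_add_le _ _ _ _
        · exact hball ν
        · exact (dist_zero_right x).le
      _ ≤ _ := by rw [dist_comm (c ν), dist_comm (d ν)]; linarith [hvc ν, hrd ν]
  obtain ⟨B, hB⟩ := exists_norm_le_of_norm_add_le hne hcl hcv hpointed hcC hdR hcd
  refine ⟨B + (a + 1), fun ν => ?_⟩
  calc ‖v ν‖ ≤ ‖c ν‖ + dist (v ν) (c ν) := by
        rw [dist_eq_norm]; exact norm_le_norm_add_norm_sub' _ _
    _ ≤ B + (a + 1) := add_le_add (hB ν) (hvc ν).le

theorem stmt7 {n : ℕ} (C : Set (EuclideanSpace ℝ (Fin n)))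
    (hne : C.Nonempty) (hcl : IsClosed C) (hcv : Convex ℝ C)
    (hpointed : ∀ d ∈ recc C, -d ∈ recc C → d = 0)
    (v r : ℕ → EuclideanSpace ℝ (Fin n))
    (hv : Tendsto (fun ν => Metric.infDist (v ν) C) atTop (nhds 0))
    (hr : Tendsto (fun ν => Metric.infDist (r ν) (recc C)) atTop (nhds 0))
    (M : ℝ) (hM : 0 ≤ M) (x : EuclideanSpace ℝ (Fin n))
    (hball : ∀ ν, v ν + r ν ∈ Metric.closedBall x M) :
    ∃ B : ℝ, ∀ ν, ‖v ν‖ ≤ B :=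
  stmt7_general C hne hcl hcv hpointed v r hv hr M x hball
end
end

section
/- Let C ⊆ R^n be nonempty, closed, convex, and line-free. For each ν let P^ν be a polyhedron that is an (ε^ν, δ^ν)-approximation of C, and suppose (ε^ν, δ^ν) → (0,0). Then for every extreme point c of C there exists a sequence x^ν → c with x^ν ∈ conv(vert P^ν). -/
open Metric Set Filter
open scoped ENNReal Pointwise Topology RealInnerProductSpace

noncomputable section

/-- The conical hull of a set: all nonnegative multiples of its elements, together with `0`. -/
def coneHull {n : ℕ} (D : Set (EuclideanSpace ℝ (Fin n))) : Set (EuclideanSpace ℝ (Fin n)) :=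
  {x | ∃ t : ℝ, 0 ≤ t ∧ ∃ d ∈ convexHull ℝ D, x = t • d}

/-- A polyhedron: `conv V + cone D` for finite sets `V`, `D`. -/
def IsPolyhedron {n : ℕ} (P : Set (EuclideanSpace ℝ (Fin n))) : Prop :=
  ∃ V D : Set (EuclideanSpace ℝ (Fin n)), V.Finite ∧ D.Finite ∧
    P = convexHull ℝ V + coneHull D

/-- `P` is an `(ε, δ)`-approximation of `C`: `P` is a line-free polyhedron with
(i) `exc(vert P, C) ≤ ε`, (ii) truncated Hausdorff distance between the recession cones
at most `δ`, (iii) `P ⊇ C`. -/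
def IsEDApprox {n : ℕ} (P C : Set (EuclideanSpace ℝ (Fin n))) (ε δ : ℝ) : Prop :=
  IsPolyhedron P ∧ (∀ d ∈ recc P, -d ∈ recc P → d = 0) ∧
  exc (Set.extremePoints ℝ P) C ≤ ENNReal.ofReal ε ∧
  Metric.hausdorffDist (recc P ∩ Metric.closedBall 0 1)
    (recc C ∩ Metric.closedBall 0 1) ≤ δ ∧
  C ⊆ P

/-!
A line-free polyhedron satisfies `P ⊆ conv (vert P) + recc P` (Minkowski: discard from
`conv V + cone D` the generators that are not extreme), so `c = y ν + z ν` with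
`y ν ∈ conv (vert P ν)` and `z ν ∈ recc P ν`. As `vert P ν` lies in the `ε ν`-thickening of
the convex set `C`, so does the segment `[c, y ν]`. If `‖z ν‖ ≥ η` along a subsequence, the
unit directions of `z ν` accumulate at some `d`, which lies in `recc C` by the Hausdorff
condition, and `c - η • d ∈ C` is a limit of points of those segments. Together with
`c + η • d ∈ C` this contradicts the extremality of `c`.
-/

section Minkowski

variable {E : Type*} [AddCommGroup E] [Module ℝ E] {K : PointedCone ℝ E}

lemma add_pointedCone_add_self (s : Set E) : s + (K : Set E) + K = s + K := by
  refine subset_antisymm ?_ (subset_add_left _ K.zero_mem)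
  rw [add_assoc]
  refine add_subset_add_left ?_
  rintro _ ⟨x, hx, y, hy, rfl⟩
  exact K.add_mem hx hy

lemma mem_of_zero_mem_hull_sub_singleton {s : Set E} (hs : Convex ℝ s) {v : E}
    (h : 0 ∈ ConvexCone.hull ℝ (s - {v})) : v ∈ s := by
  obtain ⟨r, hr, _, ⟨q, hq, v, rfl, rfl⟩, h⟩ :=
    (ConvexCone.mem_hull_of_convex (hs.sub (convex_singleton v))).1 h
  rw [smul_eq_zero_iff_right hr.ne', sub_eq_zero] at h
  exact h ▸ hq

lemma add_mem_hull_sub_singleton {s : Set E} (hs : Convex ℝ s) (hsK : s + (K : Set E) ⊆ s)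
    {v x k : E} (hx : x ∈ ConvexCone.hull ℝ (s - {v})) (hk : k ∈ K) :
    x + k ∈ ConvexCone.hull ℝ (s - {v}) := by
  have hs' := hs.sub (convex_singleton v)
  obtain ⟨r, hr, _, ⟨q, hq, v, rfl, rfl⟩, rfl⟩ := (ConvexCone.mem_hull_of_convex hs').1 hx
  refine (ConvexCone.mem_hull_of_convex hs').2 ⟨r, hr, _,
    ⟨q + r⁻¹ • k, hsK (add_mem_add hq (K.smul_mem (inv_nonneg.2 hr.le) hk)), v, rfl, rfl⟩, ?_⟩
  simp only [smul_sub, smul_add, smul_smul, mul_inv_cancel₀ hr.ne', one_smul]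
  abel

lemma sub_mem_or_sub_mem_hull {v p : E} {W : Set E} (hp : p ∈ convexHull ℝ (insert v W) + K) :
    p - v ∈ K ∨ p - v ∈ ConvexCone.hull ℝ (convexHull ℝ W + (K : Set E) - {v}) := by
  obtain ⟨p, hp, k, hk, rfl⟩ := hp
  rcases W.eq_empty_or_nonempty with rfl | hW
  · rw [insert_empty_eq, convexHull_singleton, mem_singleton_iff] at hp
    left
    rwa [hp, add_sub_cancel_left]
  rw [convexHull_insert hW, convexJoin_singleton_left, mem_iUnion₂] at hp
  simp only [segment_eq_image', exists_prop] at hp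
  obtain ⟨w, hw, θ, ⟨hθ₀, -⟩, rfl⟩ := hp
  rcases hθ₀.eq_or_lt with rfl | hθ
  · left
    simpa using hk
  · right
    have hθw : θ • (w - v) ∈ ConvexCone.hull ℝ (convexHull ℝ W + (K : Set E) - {v}) :=
      ConvexCone.smul_mem _ hθ <| ConvexCone.subset_hull
        (show w - v ∈ convexHull ℝ W + (K : Set E) - {v} from
          ⟨w, subset_add_left _ K.zero_mem hw, v, rfl, rfl⟩)
    simpa [add_sub_right_comm] using add_mem_hull_sub_singleton
      ((convex_convexHull ℝ W).add K.convex) (add_pointedCone_add_self _).subset hθw hk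

/-- Let `M` be the cone of directions from `v` into `conv W + K`. From `v`, both endpoints of a
segment through `v` lie in a direction of `K ∪ M`, and the weighted sum of the two directions
is `0`. This sum lies in `M`, whence `v ∈ conv W + K`, unless both directions are in `K`, where
salience makes the segment degenerate. -/
lemma mem_convexHull_add_of_notMem_extremePoints (hK : ∀ x ∈ K, -x ∈ K → x = 0) {v : E}
    {W : Set E} (hv : v ∉ (convexHull ℝ (insert v W) + K).extremePoints ℝ) :
    v ∈ convexHull ℝ W + K := by
  set M := ConvexCone.hull ℝ (convexHull ℝ W + (K : Set E) - {v})
  have hQ : Convex ℝ (convexHull ℝ W + (K : Set E)) := (convex_convexHull ℝ W).add K.convex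
  have hQK := (add_pointedCone_add_self (K := K) (convexHull ℝ W)).subset
  have hvS : v ∈ convexHull ℝ (insert v W) + K :=
    subset_add_left _ K.zero_mem (subset_convexHull ℝ _ (mem_insert v W))
  simp only [mem_extremePoints_iff_left, hvS, true_and, not_forall] at hv
  obtain ⟨a, ha, b, hb, ⟨u, w, hu, hw, huw, huvw⟩, hav⟩ := hv
  have hsum : u • (a - v) + w • (b - v) = 0 := by
    linear_combination (norm := module) huvw - huw • v
  refine mem_of_zero_mem_hull_sub_singleton hQ (hsum ▸ ?_)
  rcases sub_mem_or_sub_mem_hull ha with haK | haM <;>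
    rcases sub_mem_or_sub_mem_hull hb with hbK | hbM
  · refine absurd ?_ hav
    have := hK _ (K.smul_mem hu.le haK) (eq_neg_of_add_eq_zero_right hsum ▸ K.smul_mem hw.le hbK)
    rwa [smul_eq_zero_iff_right hu.ne', sub_eq_zero] at this
  · exact add_comm (u • (a - v)) _ ▸
      add_mem_hull_sub_singleton hQ hQK (M.smul_mem hw hbM) (K.smul_mem hu.le haK)
  · exact add_mem_hull_sub_singleton hQ hQK (M.smul_mem hu haM) (K.smul_mem hw.le hbK)
  · exact M.add_mem (M.smul_mem hu haM) (M.smul_mem hw hbM)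

lemma convexHull_sdiff_singleton_add_eq (hK : ∀ x ∈ K, -x ∈ K → x = 0) {V : Set E} {v : E}
    (hvV : v ∈ V) (hv : v ∉ (convexHull ℝ V + K).extremePoints ℝ) :
    convexHull ℝ (V \ {v}) + K = convexHull ℝ V + K := by
  refine subset_antisymm (add_subset_add_right (convexHull_mono sdiff_subset)) ?_
  have hvmem : v ∈ convexHull ℝ (V \ {v}) + K :=
    mem_convexHull_add_of_notMem_extremePoints hK
      (by rwa [insert_sdiff_singleton, insert_eq_of_mem hvV])
  have hV : convexHull ℝ V ⊆ convexHull ℝ (V \ {v}) + K := by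
    refine convexHull_min (fun x hx => ?_) ((convex_convexHull ℝ _).add K.convex)
    by_cases hxv : x = v
    · exact hxv ▸ hvmem
    · exact subset_add_left _ K.zero_mem (subset_convexHull ℝ _ ⟨hx, hxv⟩)
  simpa only [add_pointedCone_add_self] using add_subset_add_right (t := (K : Set E)) hV

theorem convexHull_add_subset_convexHull_extremePoints_add (hK : ∀ x ∈ K, -x ∈ K → x = 0)
    {V : Set E} (hV : V.Finite) :
    convexHull ℝ V + K ⊆ convexHull ℝ ((convexHull ℝ V + K).extremePoints ℝ) + K := by
  obtain ⟨S, ⟨hSV, hSeq⟩, hmin⟩ : ∃ S, Minimal (fun S => S ⊆ V ∧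
      convexHull ℝ S + K = convexHull ℝ V + K) S :=
    (hV.finite_subsets.subset fun S hS => hS.1).exists_minimal ⟨V, subset_rfl, rfl⟩
  rw [← hSeq]
  refine add_subset_add_right (convexHull_mono fun v hv => ?_)
  by_contra hnot
  have hdiff := convexHull_sdiff_singleton_add_eq hK hv hnot
  exact (hmin ⟨sdiff_subset.trans hSV, hdiff.trans hSeq⟩ sdiff_subset hv).2 rfl

end Minkowski

section Polyhedron

variable {n : ℕ}

lemma smul_mem_recc {C : Set (EuclideanSpace ℝ (Fin n))} {d : EuclideanSpace ℝ (Fin n)}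
    (hd : d ∈ recc C) {t : ℝ} (ht : 0 ≤ t) : t • d ∈ recc C := fun x hx s hs => by
  simpa only [smul_smul] using hd x hx (s * t) (mul_nonneg hs ht)

lemma isClosed_recc {C : Set (EuclideanSpace ℝ (Fin n))} (hC : IsClosed C) :
    IsClosed (recc C) := by
  simp only [recc, ofPred_forall]
  exact isClosed_biInter fun x _ => isClosed_iInter fun t => isClosed_iInter fun _ =>
    hC.preimage (f := fun d => x + t • d) (by fun_prop)

def reccCone (C : Set (EuclideanSpace ℝ (Fin n))) : PointedCone ℝ (EuclideanSpace ℝ (Fin n)) where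
  carrier := recc C
  add_mem' {d e} hd he x hx t ht := by
    simpa only [smul_add, add_assoc] using he _ (hd x hx t ht) t ht
  zero_mem' x hx t _ := by simpa using hx
  smul_mem' t d hd := smul_mem_recc hd t.2

@[simp] lemma coe_reccCone (C : Set (EuclideanSpace ℝ (Fin n))) : (reccCone C : Set _) = recc C :=
  rfl

lemma add_mem_coneHull {D : Set (EuclideanSpace ℝ (Fin n))} {x y : EuclideanSpace ℝ (Fin n)}
    (hx : x ∈ coneHull D) (hy : y ∈ coneHull D) : x + y ∈ coneHull D := by
  obtain ⟨a, ha, p, hp, rfl⟩ := hx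
  obtain ⟨b, hb, q, hq, rfl⟩ := hy
  have : a • p + b • q ∈ (a + b) • convexHull ℝ D := by
    rw [(convex_convexHull ℝ D).add_smul ha hb]
    exact add_mem_add (smul_mem_smul_set hp) (smul_mem_smul_set hq)
  obtain ⟨d, hd, hd'⟩ := this
  exact ⟨a + b, add_nonneg ha hb, d, hd, hd'.symm⟩

lemma smul_mem_coneHull {D : Set (EuclideanSpace ℝ (Fin n))} {x : EuclideanSpace ℝ (Fin n)}
    (hx : x ∈ coneHull D) {t : ℝ} (ht : 0 ≤ t) : t • x ∈ coneHull D := by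
  obtain ⟨s, hs, d, hd, rfl⟩ := hx
  exact ⟨t * s, mul_nonneg ht hs, d, hd, smul_smul t s d⟩

lemma coneHull_subset_recc_add (A D : Set (EuclideanSpace ℝ (Fin n))) :
    coneHull D ⊆ recc (A + coneHull D) := by
  rintro r hr _ ⟨a, ha, s, hs, rfl⟩ t ht
  exact ⟨a, ha, s + t • r, add_mem_coneHull hs (smul_mem_coneHull hr ht), (add_assoc _ _ _).symm⟩

lemma convexHull_add_coneHull_eq_add_recc {V D : Set (EuclideanSpace ℝ (Fin n))}
    (hD : D.Nonempty) :
    convexHull ℝ V + coneHull D = convexHull ℝ V + recc (convexHull ℝ V + coneHull D) := by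
  refine subset_antisymm (add_subset_add_left (coneHull_subset_recc_add _ D)) ?_
  rintro _ ⟨x, hx, r, hr, rfl⟩
  obtain ⟨d, hd⟩ := hD
  have hxP : x ∈ convexHull ℝ V + coneHull D :=
    ⟨x, hx, 0, ⟨0, le_rfl, d, subset_convexHull ℝ D hd, (zero_smul ℝ d).symm⟩, add_zero x⟩
  simpa using hr x hxP 1 zero_le_one

theorem IsPolyhedron.subset_convexHull_extremePoints_add_recc
    {P : Set (EuclideanSpace ℝ (Fin n))} (hP : IsPolyhedron P)
    (hlf : ∀ d ∈ recc P, -d ∈ recc P → d = 0) :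
    P ⊆ convexHull ℝ (P.extremePoints ℝ) + recc P := by
  obtain ⟨V, D, hV, -, rfl⟩ := hP
  rcases D.eq_empty_or_nonempty with rfl | hD
  · simp [coneHull]
  have hK : ∀ d ∈ reccCone (convexHull ℝ V + coneHull D),
      -d ∈ reccCone (convexHull ℝ V + coneHull D) → d = 0 := hlf
  have key := convexHull_add_subset_convexHull_extremePoints_add hK hV
  rwa [coe_reccCone, ← convexHull_add_coneHull_eq_add_recc hD] at key

end Polyhedron

section Approximation

lemma mem_closure_of_tendsto_of_mem_cthickening {X ι : Type*} [PseudoEMetricSpace X]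
    {l : Filter ι} [l.NeBot] {s : Set X} {x : ι → X} {a : X} {ε : ι → ℝ}
    (hx : ∀ᶠ i in l, x i ∈ cthickening (ε i) s) (hxa : Tendsto x l (𝓝 a))
    (hε : Tendsto ε l (𝓝 0)) : a ∈ closure s := by
  rw [closure_eq_iInter_cthickening]
  refine mem_iInter₂.2 fun r hr => isClosed_cthickening.mem_of_tendsto hxa ?_
  filter_upwards [hx, hε.eventually (gt_mem_nhds hr)] with i hi hεi
  exact cthickening_mono hεi.le s hi

lemma mem_cthickening_of_hausdorffDist_le {X : Type*} [PseudoMetricSpace X] {s t : Set X}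
    {x : X} {r : ℝ} (hx : x ∈ s) (hfin : hausdorffEDist s t ≠ ⊤) (h : hausdorffDist s t ≤ r) :
    x ∈ cthickening r t := by
  rw [mem_cthickening_iff]
  calc infEDist x t ≤ hausdorffEDist s t := infEDist_le_hausdorffEDist_of_mem hx
    _ = ENNReal.ofReal (hausdorffDist s t) := (ENNReal.ofReal_toReal hfin).symm
    _ ≤ ENNReal.ofReal r := ENNReal.ofReal_le_ofReal h

variable {n : ℕ}

lemma subset_cthickening_of_exc_le {A B : Set (EuclideanSpace ℝ (Fin n))} {ε : ℝ}
    (h : exc A B ≤ ENNReal.ofReal ε) : A ⊆ cthickening ε B := fun x hx =>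
  mem_cthickening_iff.2 ((le_iSup₂ (f := fun x _ => infEDist x B) x hx).trans h)

lemma eq_zero_of_sub_mem_of_mem_recc {C : Set (EuclideanSpace ℝ (Fin n))}
    {c d : EuclideanSpace ℝ (Fin n)} (hc : c ∈ C.extremePoints ℝ) (hd : d ∈ recc C)
    (hcd : c - d ∈ C) : d = 0 := by
  have hcd' : c + d ∈ C := by simpa using hd c hc.1 1 zero_le_one
  have hmid : c ∈ openSegment ℝ (c - d) (c + d) :=
    ⟨1 / 2, 1 / 2, by norm_num, by norm_num, by norm_num, by module⟩
  simpa using hc.2 hcd hcd' hmid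

lemma mem_recc_of_tendsto_of_hausdorffDist_le {C : Set (EuclideanSpace ℝ (Fin n))}
    (hC : IsClosed C) {R : ℕ → Set (EuclideanSpace ℝ (Fin n))} {δ : ℕ → ℝ}
    (hR : ∀ k, hausdorffDist (recc (R k) ∩ closedBall 0 1) (recc C ∩ closedBall 0 1) ≤ δ k)
    (hδ : Tendsto δ atTop (𝓝 0)) {d : ℕ → EuclideanSpace ℝ (Fin n)}
    {d₀ : EuclideanSpace ℝ (Fin n)} (hd : ∀ k, d k ∈ recc (R k) ∩ closedBall 0 1)
    (hlim : Tendsto d atTop (𝓝 d₀)) : d₀ ∈ recc C := by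
  have hB : IsClosed (recc C ∩ closedBall 0 1) := (isClosed_recc hC).inter isClosed_closedBall
  have hfin : ∀ k, hausdorffEDist (recc (R k) ∩ closedBall 0 1) (recc C ∩ closedBall 0 1) ≠ ⊤ :=
    fun k => hausdorffEDist_ne_top_of_nonempty_of_bounded ⟨d k, hd k⟩
      ⟨0, (reccCone C).zero_mem, mem_closedBall_self zero_le_one⟩
      (isBounded_closedBall.subset inter_subset_right)
      (isBounded_closedBall.subset inter_subset_right)
  refine (hB.closure_subset (mem_closure_of_tendsto_of_mem_cthickening
    (Eventually.of_forall fun k => ?_) hlim hδ)).1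
  exact mem_cthickening_of_hausdorffDist_le (hd k) (hfin k) (hR k)

theorem tendsto_of_mem_cthickening_of_sub_mem_recc {C : Set (EuclideanSpace ℝ (Fin n))}
    (hcl : IsClosed C) (hcv : Convex ℝ C) {c : EuclideanSpace ℝ (Fin n)}
    (hc : c ∈ C.extremePoints ℝ) {R : ℕ → Set (EuclideanSpace ℝ (Fin n))} {ε δ : ℕ → ℝ}
    (hε : Tendsto ε atTop (𝓝 0)) (hδ : Tendsto δ atTop (𝓝 0))
    (hR : ∀ ν, hausdorffDist (recc (R ν) ∩ closedBall 0 1) (recc C ∩ closedBall 0 1) ≤ δ ν)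
    {y : ℕ → EuclideanSpace ℝ (Fin n)} (hy : ∀ ν, y ν ∈ cthickening (ε ν) C)
    (hyR : ∀ ν, c - y ν ∈ recc (R ν)) : Tendsto y atTop (𝓝 c) := by
  rw [Metric.tendsto_nhds]
  intro η hη
  by_contra hfar
  simp only [not_eventually, not_lt] at hfar
  obtain ⟨φ, hφ, hφη⟩ := extraction_of_frequently_atTop hfar
  set z := fun k => c - y (φ k)
  have hz : ∀ k, η ≤ ‖z k‖ := fun k => by simpa [z, dist_eq_norm'] using hφη k
  set u := fun k => ‖z k‖⁻¹ • z k
  have hu_norm : ∀ k, ‖u k‖ = 1 := fun k => by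
    simp only [u, norm_smul, norm_inv, norm_norm]
    exact inv_mul_cancel₀ (hη.trans_le (hz k)).ne'
  have hu : ∀ k, u k ∈ recc (R (φ k)) ∩ closedBall 0 1 := fun k =>
    ⟨smul_mem_recc (hyR (φ k)) (inv_nonneg.2 (norm_nonneg _)), by simp [hu_norm k]⟩
  -- `c - η • u k` lies on the segment from `c` to `y (φ k)`
  have hseg : ∀ k, c - η • u k ∈ cthickening (ε (φ k)) C := fun k => by
    have hpos : 0 < ‖z k‖ := hη.trans_le (hz k)
    have hmem := (hcv.cthickening (ε (φ k))).add_smul_sub_mem (self_subset_cthickening C hc.1)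
      (hy (φ k)) ⟨by positivity, (div_le_one hpos).2 (hz k)⟩
    convert hmem using 1
    simp only [u, z, div_eq_mul_inv]
    module
  obtain ⟨d, -, ψ, hψ, hlim⟩ := tendsto_subseq_of_bounded isBounded_closedBall fun k => (hu k).2
  have hd_norm : ‖d‖ = 1 := tendsto_nhds_unique hlim.norm (by simp [hu_norm])
  have hdC : d ∈ recc C := mem_recc_of_tendsto_of_hausdorffDist_le hcl (fun k => hR (φ (ψ k)))
    (hδ.comp (hφ.comp hψ).tendsto_atTop) (fun k => hu (ψ k)) hlim
  have hcd : c - η • d ∈ C := hcl.closure_subset <| mem_closure_of_tendsto_of_mem_cthickening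
    (Eventually.of_forall fun k => hseg (ψ k)) (tendsto_const_nhds.sub (hlim.const_smul η))
    (hε.comp (hφ.comp hψ).tendsto_atTop)
  rcases smul_eq_zero.1 (eq_zero_of_sub_mem_of_mem_recc hc (smul_mem_recc hdC hη.le) hcd) with h | h
  · exact hη.ne' h
  · simp [h] at hd_norm

end Approximation

theorem stmt9_general {n : ℕ} (C : Set (EuclideanSpace ℝ (Fin n)))
    (hcl : IsClosed C) (hcv : Convex ℝ C)
    (P : ℕ → Set (EuclideanSpace ℝ (Fin n))) (ε δ : ℕ → ℝ)
    (happrox : ∀ ν, IsEDApprox (P ν) C (ε ν) (δ ν))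
    (hε : Tendsto ε atTop (nhds 0)) (hδ : Tendsto δ atTop (nhds 0)) :
    ∀ c ∈ Set.extremePoints ℝ C, ∃ x : ℕ → EuclideanSpace ℝ (Fin n),
      (∀ ν, x ν ∈ convexHull ℝ (Set.extremePoints ℝ (P ν))) ∧
      Tendsto x atTop (nhds c) := by
  intro c hc
  have hdecomp : ∀ ν, ∃ y ∈ convexHull ℝ ((P ν).extremePoints ℝ), c - y ∈ recc (P ν) := by
    intro ν
    obtain ⟨hpoly, hlf, -, -, hCP⟩ := happrox ν
    obtain ⟨y, hy, r, hr, rfl⟩ := hpoly.subset_convexHull_extremePoints_add_recc hlf (hCP hc.1)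
    exact ⟨y, hy, by rwa [add_sub_cancel_left]⟩
  choose y hy hyR using hdecomp
  refine ⟨y, hy, tendsto_of_mem_cthickening_of_sub_mem_recc hcl hcv hc hε hδ
    (fun ν => (happrox ν).2.2.2.1) (fun ν => ?_) hyR⟩
  exact convexHull_min (subset_cthickening_of_exc_le (happrox ν).2.2.1) (hcv.cthickening _) (hy ν)

theorem stmt9 {n : ℕ} (C : Set (EuclideanSpace ℝ (Fin n)))
    (hne : C.Nonempty) (hcl : IsClosed C) (hcv : Convex ℝ C)
    (hpointed : ∀ d ∈ recc C, -d ∈ recc C → d = 0)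
    (P : ℕ → Set (EuclideanSpace ℝ (Fin n))) (ε δ : ℕ → ℝ)
    (happrox : ∀ ν, IsEDApprox (P ν) C (ε ν) (δ ν))
    (hε : Tendsto ε atTop (nhds 0)) (hδ : Tendsto δ atTop (nhds 0)) :
    ∀ c ∈ Set.extremePoints ℝ C, ∃ x : ℕ → EuclideanSpace ℝ (Fin n),
      (∀ ν, x ν ∈ convexHull ℝ (Set.extremePoints ℝ (P ν))) ∧
      Tendsto x atTop (nhds c) :=
  stmt9_general C hcl hcv P ε δ happrox hε hδ
end
end

section
/- Let K be a closed convex pointed cone in R^n with K ≠ {0}, let M be a compact base of K contained in the hyperplane {x : wᵀx = −(1+δ)} (so K = cone M), and let M̄ be a compact convex set with M ⊆ M̄, ||x|| ≥ 1 for all x ∈ M̄, and d_H(M̄, M) ≤ δ. Then the cone K̄ = cone M̄ satisfies d_H(K̄ ∩ B_1(0), K ∩ B_1(0)) ≤ δ. -/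
open Metric Set Filter
open scoped ENNReal Pointwise Topology RealInnerProductSpace

noncomputable section

/-- The cone generated by a set `M`: all nonnegative multiples of elements of `M`. -/
def coneOf {n : ℕ} (M : Set (EuclideanSpace ℝ (Fin n))) : Set (EuclideanSpace ℝ (Fin n)) :=
  {x | ∃ t : ℝ, 0 ≤ t ∧ ∃ m ∈ M, x = t • m}


/-- Projecting a point of norm ≥ 1 to the unit sphere moves it closer to any point of the ball. -/
lemma aux_proj17 {n : ℕ} (a b : EuclideanSpace ℝ (Fin n)) (ha : ‖a‖ ≤ 1) (hb : 1 ≤ ‖b‖) :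
    ‖a - ‖b‖⁻¹ • b‖ ≤ ‖a - b‖ := by
  have hb0 : (0:ℝ) < ‖b‖ := lt_of_lt_of_le one_pos hb
  have hinner : ⟪a, b⟫ ≤ ‖b‖ := by
    have := real_inner_le_norm a b
    nlinarith [norm_nonneg b]
  have e1 : ‖a - b‖ ^ 2 = ‖a‖ ^ 2 - 2 * ⟪a, b⟫ + ‖b‖ ^ 2 := norm_sub_sq_real a b
  have e2 : ‖a - ‖b‖⁻¹ • b‖ ^ 2
      = ‖a‖ ^ 2 - 2 * (‖b‖⁻¹ * ⟪a, b⟫) + 1 := by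
    have := norm_sub_sq_real a (‖b‖⁻¹ • b)
    rw [real_inner_smul_right, norm_smul, Real.norm_eq_abs,
      abs_of_pos (inv_pos.mpr hb0)] at this
    rw [this]
    field_simp
  have hr1 : ‖b‖⁻¹ ≤ 1 := by
    rw [inv_le_one_iff₀]; right; exact hb
  have hsq : ‖a - ‖b‖⁻¹ • b‖ ^ 2 ≤ ‖a - b‖ ^ 2 := by
    rw [e1, e2]
    have h2 : 2 * (1 - ‖b‖⁻¹) * ⟪a, b⟫ ≤ 2 * (1 - ‖b‖⁻¹) * ‖b‖ := by
      apply mul_le_mul_of_nonneg_left hinner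
      nlinarith
    nlinarith [sq_nonneg (‖b‖ - 1), inv_mul_cancel₀ hb0.ne']
  nlinarith [norm_nonneg (a - ‖b‖⁻¹ • b), norm_nonneg (a - b)]

theorem stmt17 {n : ℕ} (K : Set (EuclideanSpace ℝ (Fin n)))
    (hcl : IsClosed K) (hcv : Convex ℝ K)
    (hcone : ∀ x ∈ K, ∀ t : ℝ, 0 ≤ t → t • x ∈ K)
    (hpointed : ∀ x ∈ K, -x ∈ K → x = 0) (hKnontriv : K ≠ {0})
    (w : EuclideanSpace ℝ (Fin n)) (δ : ℝ) (hδ : 0 < δ)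
    (M : Set (EuclideanSpace ℝ (Fin n))) (hMcomp : IsCompact M)
    (hMhyp : M ⊆ {x | ⟪w, x⟫ = -(1 + δ)}) (hKM : K = coneOf M)
    (M' : Set (EuclideanSpace ℝ (Fin n))) (hM'comp : IsCompact M') (hM'cv : Convex ℝ M')
    (hMM' : M ⊆ M') (hM'norm : ∀ x ∈ M', 1 ≤ ‖x‖)
    (hMdist : Metric.hausdorffDist M' M ≤ δ) :
    Metric.hausdorffDist (coneOf M' ∩ Metric.closedBall (0 : EuclideanSpace ℝ (Fin n)) 1)
      (K ∩ Metric.closedBall (0 : EuclideanSpace ℝ (Fin n)) 1) ≤ δ := by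
  rcases M.eq_empty_or_nonempty with hM | hMne
  · have hKe : K = ∅ := by
      rw [hKM, hM]
      ext x; simp [coneOf]
    rw [hKe, Set.empty_inter, Metric.hausdorffDist_empty]
    exact hδ.le
  have hMM'dist : ∀ m ∈ M', ∃ c ∈ M, dist m c ≤ δ := by
    intro m hm
    have hne : EMetric.hausdorffEdist M' M ≠ ⊤ :=
      Metric.hausdorffEdist_ne_top_of_nonempty_of_bounded ⟨m, hm⟩ hMne
        hM'comp.isBounded hMcomp.isBounded
    have h1 : Metric.infDist m M ≤ δ :=
      le_trans (Metric.infDist_le_hausdorffDist_of_mem hm hne) hMdist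
    obtain ⟨c, hc, hdc⟩ := hMcomp.exists_infDist_eq_dist hMne m
    exact ⟨c, hc, by rw [← hdc]; exact h1⟩
  apply Metric.hausdorffDist_le_of_mem_dist hδ.le
  · rintro x ⟨⟨t, ht, m, hm, rfl⟩, hx⟩
    rcases eq_or_lt_of_le ht with rfl | htpos
    · refine ⟨0, ⟨?_, by simp⟩, by simp [hδ.le]⟩
      obtain ⟨c, hc⟩ := hMne
      rw [hKM]
      exact ⟨0, le_refl 0, c, hc, by simp⟩
    obtain ⟨c, hc, hdc⟩ := hMM'dist m hm
    have hm1 : 1 ≤ ‖m‖ := hM'norm m hm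
    have hxnorm : ‖t • m‖ ≤ 1 := mem_closedBall_zero_iff.mp hx
    have ht1 : t ≤ 1 := by
      rw [norm_smul, Real.norm_of_nonneg ht] at hxnorm
      nlinarith
    have hdmc : ‖m - c‖ ≤ δ := by rwa [← dist_eq_norm]
    have key : ‖t • m - t • c‖ ≤ δ := by
      rw [← smul_sub, norm_smul, Real.norm_of_nonneg ht]
      calc t * ‖m - c‖ ≤ 1 * ‖m - c‖ :=
            mul_le_mul_of_nonneg_right ht1 (norm_nonneg _)
        _ = ‖m - c‖ := one_mul _
        _ ≤ δ := hdmc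
    by_cases hball : ‖t • c‖ ≤ 1
    · refine ⟨t • c, ⟨?_, mem_closedBall_zero_iff.mpr hball⟩, ?_⟩
      · rw [hKM]; exact ⟨t, ht, c, hc, rfl⟩
      · rw [dist_eq_norm]; exact key
    · have hb1 : 1 ≤ ‖t • c‖ := (lt_of_not_ge hball).le
      refine ⟨‖t • c‖⁻¹ • (t • c), ⟨?_, ?_⟩, ?_⟩
      · rw [hKM]
        refine ⟨‖t • c‖⁻¹ * t, by positivity, c, hc, by rw [mul_smul]⟩
      · rw [mem_closedBall_zero_iff, norm_smul, Real.norm_eq_abs,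
          abs_of_pos (inv_pos.mpr (lt_of_lt_of_le one_pos hb1)),
          inv_mul_cancel₀ (by positivity : ‖t • c‖ ≠ 0)]
      · rw [dist_eq_norm]
        exact le_trans (aux_proj17 _ _ hxnorm hb1) key
  · rintro x ⟨hxK, hxB⟩
    refine ⟨x, ⟨?_, hxB⟩, by simp [hδ.le]⟩
    rw [hKM] at hxK
    obtain ⟨t, ht, m, hm, rfl⟩ := hxK
    exact ⟨t, ht, m, hMM' hm, rfl⟩
end
end
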